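/- arXiv:2401.10257 — 3 statements merged into one kernel-verified Lean document; each statement's English description precedes it below -/
import Mathlib

section
/- Let Θ be a type, N ≥ 1, U : Θ → Fin N → ℝ a family of score functions, and p : Fin N → ℝ with ∑ᵢ pᵢ = 1. Define 𝒰(θ) = (1/N)·∑ᵢ U_θ(i), 𝒰_p(θ) = ∑ᵢ U_θ(i)·pᵢ, and Ĉov[U_θ, p] = ∑ᵢ (U_θ(i) − (1/N)∑ⱼU_θ(j))·(pᵢ − 1/N). If θ̃ ∈ Θ maximizes θ ↦ Ĉov[U_θ, p] (i.e. Ĉov[U_θ, p] ≤ Ĉov[U_θ̃, p] for all θ), then for every θ ∈ Θ, 𝒰_p(θ̃) − 𝒰_p(θ) ≥ 𝒰(θ̃) − 𝒰(θ) (second claim of Theorem 3 of the paper). -/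
open Finset

theorem Fintype.card_ne_zero_of_sum_eq_one {ι : Type*} [Fintype ι] {p : ι → ℝ}
    (hp : ∑ i, p i = 1) : Fintype.card ι ≠ 0 := by
  intro h
  rw [Fintype.card_eq_zero_iff] at h
  simp at hp

/-- The covariance decomposition `𝒰_p = 𝒰 + Ĉov[u, p]`; the mean of a prior is `1 / #ι`. -/
theorem sum_centered_mul_sub_inv_card {ι : Type*} [Fintype ι] (u : ι → ℝ) {p : ι → ℝ}
    (hp : ∑ i, p i = 1) :
    ∑ i, (u i - (1 / Fintype.card ι) * ∑ j, u j) * (p i - 1 / Fintype.card ι) =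
      ∑ i, u i * p i - (1 / Fintype.card ι) * ∑ i, u i := by
  have hcard : (Fintype.card ι : ℝ) ≠ 0 :=
    Nat.cast_ne_zero.mpr (Fintype.card_ne_zero_of_sum_eq_one hp)
  simp only [sub_mul, mul_sub, sum_sub_distrib, ← mul_sum, ← sum_mul, hp, sum_const, card_univ,
    nsmul_eq_mul]
  field_simp
  ring

theorem curriculum_gain_ge_plain_gain_general
    {Θ : Type*} (N : ℕ) (U : Θ → Fin N → ℝ) (p : Fin N → ℝ)
    (hp : ∑ i, p i = 1) (θopt : Θ)
    (hmax : ∀ θ : Θ,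
      ∑ i, (U θ i - (1 / N) * ∑ j, U θ j) * (p i - 1 / N) ≤
        ∑ i, (U θopt i - (1 / N) * ∑ j, U θopt j) * (p i - 1 / N)) :
    ∀ θ : Θ,
      (∑ i, U θopt i * p i) - (∑ i, U θ i * p i) ≥
        (1 / N) * (∑ i, U θopt i) - (1 / N) * (∑ i, U θ i) := by
  have decomp (θ : Θ) : ∑ i, (U θ i - (1 / N) * ∑ j, U θ j) * (p i - 1 / N) =
      ∑ i, U θ i * p i - (1 / N) * ∑ i, U θ i := by
    simpa only [Fintype.card_fin] using sum_centered_mul_sub_inv_card (U θ) hp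
  intro θ
  have hcov := hmax θ
  rw [decomp, decomp] at hcov
  linarith

/-- If `θ̃` maximizes the empirical covariance between the scores and the prior,
then the gain of the curriculum objective at `θ̃` over any `θ` dominates the gain
of the plain objective. -/
theorem curriculum_gain_ge_plain_gain
    {Θ : Type*} (N : ℕ) (hN : 1 ≤ N) (U : Θ → Fin N → ℝ) (p : Fin N → ℝ)
    (hp : ∑ i, p i = 1) (θopt : Θ)
    (hmax : ∀ θ : Θ,
      ∑ i, (U θ i - (1 / N) * ∑ j, U θ j) * (p i - 1 / N) ≤
        ∑ i, (U θopt i - (1 / N) * ∑ j, U θopt j) * (p i - 1 / N)) :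
    ∀ θ : Θ,
      (∑ i, U θopt i * p i) - (∑ i, U θ i * p i) ≥
        (1 / N) * (∑ i, U θopt i) - (1 / N) * (∑ i, U θ i) :=
  curriculum_gain_ge_plain_gain_general N U p hp θopt hmax
end

section
/- Let Θ be a type, N ≥ 1, U : Θ → Fin N → ℝ, and θ̃ ∈ Θ with P = ∑ᵢ U_θ̃(i) > 0; set pᵢ = U_θ̃(i)/P. If θ̃ maximizes θ ↦ 𝒰(θ) = (1/N)·∑ᵢ U_θ(i), then for every θ ∈ Θ, 𝒰_p(θ) ≤ 𝒰(θ̃) + (1/P)·√(V̂ar[U_θ]·V̂ar[U_θ̃]), where 𝒰_p(θ) = ∑ᵢ U_θ(i)·pᵢ and V̂ar[V] = ∑ᵢ (Vᵢ − (1/N)∑ⱼVⱼ)² (upper bound established in the proof of Proposition 1 of the paper). -/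
/-!
Reweighting by `pᵢ = U_θ̃(i) / P` shifts the plain objective by a covariance:
`𝒰_p(θ) = 𝒰(θ) + Ĉov[U_θ, U_θ̃] / P`. Since `θ̃` maximizes `𝒰`, the first term is at most
`𝒰(θ̃)`, and Cauchy–Schwarz bounds the covariance by `√(V̂ar[U_θ] · V̂ar[U_θ̃])`.
-/

open Finset

namespace Empirical

variable {ι : Type*} [Fintype ι]

noncomputable def mean (u : ι → ℝ) : ℝ := (1 / Fintype.card ι) * ∑ i, u i

noncomputable def cov (u v : ι → ℝ) : ℝ := ∑ i, (u i - mean u) * (v i - mean v)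

noncomputable def var (u : ι → ℝ) : ℝ := ∑ i, (u i - mean u) ^ 2

theorem card_mul_mean (u : ι → ℝ) : Fintype.card ι * mean u = ∑ i, u i := by
  rcases isEmpty_or_nonempty ι with hι | hι
  · simp
  · rw [mean, ← mul_assoc, mul_one_div_cancel (by positivity), one_mul]

theorem cov_eq_sum_mul_sub_mean_mul_sum (u v : ι → ℝ) :
    cov u v = ∑ i, u i * v i - mean u * ∑ i, v i := by
  have hexpand : ∀ i, (u i - mean u) * (v i - mean v) =
      u i * v i - mean u * v i - mean v * u i + mean u * mean v := fun i ↦ by ring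
  simp only [cov, hexpand, sum_add_distrib, sum_sub_distrib, ← mul_sum, sum_const, card_univ,
    nsmul_eq_mul, ← card_mul_mean u]
  ring

theorem sum_mul_div_sum_eq_mean_add_cov_div (u v : ι → ℝ) (hv : ∑ i, v i ≠ 0) :
    ∑ i, u i * (v i / ∑ j, v j) = mean u + (1 / ∑ j, v j) * cov u v := by
  rw [cov_eq_sum_mul_sub_mean_mul_sum]
  simp only [← mul_div_assoc, ← sum_div]
  field_simp
  ring

theorem cov_le_sqrt_var_mul_var (u v : ι → ℝ) : cov u v ≤ √(var u * var v) :=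
  Real.le_sqrt_of_sq_le (sum_mul_sq_le_sq_mul_sq _ _ _)

end Empirical

theorem selfTaught_objective_upper_bound_general
    {Θ : Type*} (N : ℕ) (U : Θ → Fin N → ℝ) (θopt : Θ)
    (hP : 0 < ∑ i, U θopt i)
    (hmax : ∀ θ : Θ, (1 / N) * (∑ i, U θ i) ≤ (1 / N) * (∑ i, U θopt i)) :
    ∀ θ : Θ,
      ∑ i, U θ i * (U θopt i / (∑ j, U θopt j)) ≤
        (1 / N) * (∑ i, U θopt i) +
          (1 / (∑ j, U θopt j)) *
            Real.sqrt ((∑ i, (U θ i - (1 / N) * ∑ j, U θ j) ^ 2) *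
              (∑ i, (U θopt i - (1 / N) * ∑ j, U θopt j) ^ 2)) := by
  intro θ
  have hreweight := Empirical.sum_mul_div_sum_eq_mean_add_cov_div (U θ) (U θopt) hP.ne'
  have hcov := Empirical.cov_le_sqrt_var_mul_var (U θ) (U θopt)
  simp only [Empirical.cov, Empirical.var, Empirical.mean, Fintype.card_fin] at hreweight hcov
  rw [hreweight]
  exact add_le_add (hmax θ) (mul_le_mul_of_nonneg_left hcov (by positivity))

/-- Cauchy–Schwarz style upper bound on the self-taught curriculum objective:
if `θ̃` maximizes the plain objective, then `𝒰_p(θ) ≤ 𝒰(θ̃) + (1/P)·√(Var[U_θ]·Var[U_θ̃])`. -/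
theorem selfTaught_objective_upper_bound
    {Θ : Type*} (N : ℕ) (hN : 1 ≤ N) (U : Θ → Fin N → ℝ) (θopt : Θ)
    (hP : 0 < ∑ i, U θopt i)
    (hmax : ∀ θ : Θ, (1 / N) * (∑ i, U θ i) ≤ (1 / N) * (∑ i, U θopt i)) :
    ∀ θ : Θ,
      ∑ i, U θ i * (U θopt i / (∑ j, U θopt j)) ≤
        (1 / N) * (∑ i, U θopt i) +
          (1 / (∑ j, U θopt j)) *
            Real.sqrt ((∑ i, (U θ i - (1 / N) * ∑ j, U θ j) ^ 2) *
              (∑ i, (U θopt i - (1 / N) * ∑ j, U θopt j) ^ 2)) :=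
  selfTaught_objective_upper_bound_general N U θopt hP hmax
end

section
/- Let Θ be a type, N ≥ 1, U : Θ → Fin N → ℝ, and θ̃ ∈ Θ with P = ∑ᵢ U_θ̃(i) > 0; set pᵢ = U_θ̃(i)/P. Suppose (i) θ̃ maximizes θ ↦ 𝒰(θ) = (1/N)·∑ᵢ U_θ(i), and (ii) for all θ ∈ Θ, Ĉov[U_θ, U_θ̃] ≤ V̂ar[U_θ̃]. Then θ̃ maximizes θ ↦ 𝒰_p(θ) = ∑ᵢ U_θ(i)·pᵢ, and for every θ ∈ Θ, 𝒰_p(θ̃) − 𝒰_p(θ) ≥ 𝒰(θ̃) − 𝒰(θ) (Proposition 1 of the paper). -/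
/-!
With the self-taught prior `pᵢ = vᵢ / ∑ⱼ vⱼ`, the prior-weighted objective of `u` splits as
`𝒰_p(u) = Ê[u] + Ĉov[u, v] / ∑ⱼ vⱼ`. Hence the curriculum gain of `v` over `u` is its plain gain
plus `(V̂ar[v] - Ĉov[u, v]) / ∑ⱼ vⱼ`, which is nonnegative under the covariance hypothesis.
-/

open Finset

section Empirical

variable {ι : Type*} [Fintype ι]

noncomputable def empMean (u : ι → ℝ) : ℝ := (1 / Fintype.card ι) * ∑ i, u i

noncomputable def empCov (u v : ι → ℝ) : ℝ := ∑ i, (u i - empMean u) * (v i - empMean v)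

noncomputable def selfTaughtPrior (v : ι → ℝ) (i : ι) : ℝ := v i / ∑ j, v j

noncomputable def weightedMean (p u : ι → ℝ) : ℝ := ∑ i, u i * p i

theorem sum_eq_card_mul_empMean (u : ι → ℝ) : ∑ i, u i = Fintype.card ι * empMean u := by
  rcases isEmpty_or_nonempty ι with _ | _
  · simp
  · have : (Fintype.card ι : ℝ) ≠ 0 := by positivity
    rw [empMean]
    field_simp

theorem empCov_eq_sum_mul_sub (u v : ι → ℝ) :
    empCov u v = ∑ i, u i * v i - Fintype.card ι * empMean u * empMean v := by
  simp only [empCov, sub_mul, mul_sub, sum_sub_distrib, ← sum_mul, ← mul_sum,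
    sum_eq_card_mul_empMean u, sum_eq_card_mul_empMean v, sum_const, card_univ, nsmul_eq_mul]
  ring

theorem weightedMean_selfTaughtPrior {v : ι → ℝ} (hv : ∑ j, v j ≠ 0) (u : ι → ℝ) :
    weightedMean (selfTaughtPrior v) u = empMean u + empCov u v / ∑ j, v j := by
  have hsum : ∑ i, u i * selfTaughtPrior v i = (∑ i, u i * v i) / ∑ j, v j := by
    rw [sum_div]
    exact sum_congr rfl fun i _ => (mul_div_assoc _ _ _).symm
  rw [weightedMean, hsum, empCov_eq_sum_mul_sub, mul_right_comm, ← sum_eq_card_mul_empMean v]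
  field_simp
  ring

theorem empMean_sub_le_weightedMean_selfTaughtPrior_sub {u v : ι → ℝ} (hv : 0 < ∑ j, v j)
    (hcov : empCov u v ≤ empCov v v) :
    empMean v - empMean u ≤
      weightedMean (selfTaughtPrior v) v - weightedMean (selfTaughtPrior v) u := by
  rw [weightedMean_selfTaughtPrior hv.ne', weightedMean_selfTaughtPrior hv.ne']
  have : empCov u v / ∑ j, v j ≤ empCov v v / ∑ j, v j := div_le_div_of_nonneg_right hcov hv.le
  linarith

end Empirical

theorem selfTaught_curriculum_proposition_general
    {Θ : Type*} (N : ℕ) (U : Θ → Fin N → ℝ) (θopt : Θ)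
    (hP : 0 < ∑ i, U θopt i)
    (hmax : ∀ θ : Θ, (1 / N) * (∑ i, U θ i) ≤ (1 / N) * (∑ i, U θopt i))
    (hcov : ∀ θ : Θ,
      ∑ i, (U θ i - (1 / N) * ∑ j, U θ j) *
          (U θopt i - (1 / N) * ∑ j, U θopt j) ≤
        ∑ i, (U θopt i - (1 / N) * ∑ j, U θopt j) ^ 2) :
    (∀ θ : Θ,
      ∑ i, U θ i * (U θopt i / (∑ j, U θopt j)) ≤
        ∑ i, U θopt i * (U θopt i / (∑ j, U θopt j))) ∧
    (∀ θ : Θ,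
      (∑ i, U θopt i * (U θopt i / (∑ j, U θopt j))) -
          (∑ i, U θ i * (U θopt i / (∑ j, U θopt j))) ≥
        (1 / N) * (∑ i, U θopt i) - (1 / N) * (∑ i, U θ i)) := by
  have gain : ∀ θ : Θ,
      empMean (U θopt) - empMean (U θ) ≤
        weightedMean (selfTaughtPrior (U θopt)) (U θopt) -
          weightedMean (selfTaughtPrior (U θopt)) (U θ) := fun θ =>
    empMean_sub_le_weightedMean_selfTaughtPrior_sub hP (by
      simpa only [empCov, empMean, Fintype.card_fin, sq] using hcov θ)
  simp only [weightedMean, selfTaughtPrior, empMean, Fintype.card_fin] at gain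
  exact ⟨fun θ => by linarith [gain θ, hmax θ], fun θ => gain θ⟩

/-- Proposition 1: with the self-taught prior `pᵢ = U_θ̃(i)/P`, if `θ̃` maximizes
the plain objective and `Cov[U_θ, U_θ̃] ≤ Var[U_θ̃]` for all `θ`, then `θ̃` also
maximizes the curriculum objective, and its curriculum gain dominates its plain gain. -/
theorem selfTaught_curriculum_proposition
    {Θ : Type*} (N : ℕ) (hN : 1 ≤ N) (U : Θ → Fin N → ℝ) (θopt : Θ)
    (hP : 0 < ∑ i, U θopt i)
    (hmax : ∀ θ : Θ, (1 / N) * (∑ i, U θ i) ≤ (1 / N) * (∑ i, U θopt i))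
    (hcov : ∀ θ : Θ,
      ∑ i, (U θ i - (1 / N) * ∑ j, U θ j) *
          (U θopt i - (1 / N) * ∑ j, U θopt j) ≤
        ∑ i, (U θopt i - (1 / N) * ∑ j, U θopt j) ^ 2) :
    (∀ θ : Θ,
      ∑ i, U θ i * (U θopt i / (∑ j, U θopt j)) ≤
        ∑ i, U θopt i * (U θopt i / (∑ j, U θopt j))) ∧
    (∀ θ : Θ,
      (∑ i, U θopt i * (U θopt i / (∑ j, U θopt j))) -
          (∑ i, U θ i * (U θopt i / (∑ j, U θopt j))) ≥
        (1 / N) * (∑ i, U θopt i) - (1 / N) * (∑ i, U θ i)) :=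
  selfTaught_curriculum_proposition_general N U θopt hP hmax hcov
end
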